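/- For the uniform, exponential time decay, and U-shaped attribution rules, the user × publisher × advertiser adjacency relation with post-attribution contribution bound enforcement is invalid: for each of these rules and every constant C₀ > 0 there exist adjacent datasets with contribution bound r = 1 whose attributed datasets are at ℓ1-distance greater than C₀. -/

import Mathlib

/-! Framework for differentially private ad conversion measurement
(Delaney et al., "Differentially Private Ad Conversion Measurement"). -/

structure Impression where
  time : ℕ
  user : ℕ
  pub : ℕ
  adv : ℕ
  id : ℕ
deriving DecidableEq

structure Conversion where
  time : ℕ
  user : ℕ
  adv : ℕ
  id : ℕ
deriving DecidableEq

structure Dataset where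
  imps : List Impression
  convs : List Conversion

/-- An attribution rule maps a time-ordered list of impressions and a conversion
to a list of credits (one per impression). -/
abbrev AttrRule := List Impression → Conversion → List ℝ

/-- A valid attribution rule outputs one nonnegative weight per impression, summing to 1. -/
def ValidRule (a : AttrRule) : Prop :=
  ∀ is c, is ≠ [] →
    (a is c).length = is.length ∧ (a is c).sum = 1 ∧ ∀ w ∈ a is c, (0 : ℝ) ≤ w

/-- Impressions eligible for attribution of conversion `c`: those occurring earlier
with the same user and advertiser. -/
def eligible (D : Dataset) (c : Conversion) : List Impression :=
  D.imps.filter fun i => decide (i.time < c.time ∧ i.user = c.user ∧ i.adv = c.adv)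

/-- ℓ₁ distance between attributed datasets. -/
noncomputable def l1dist (w w' : (Impression × Conversion) →₀ ℝ) : ℝ :=
  (w - w').sum fun _ v => |v|

/-- Impressions and conversions are listed in time order. -/
def SortedDS (D : Dataset) : Prop :=
  D.imps.Pairwise (fun i j => i.time ≤ j.time) ∧
  D.convs.Pairwise (fun c c' => c.time ≤ c'.time)

/-- Inner loop of post-attribution contribution-bound enforcement: each weighted
(impression, conversion) pair is kept only if the remaining bound of its scope covers
the weight, in which case the weight is deducted. -/
noncomputable def applyPairs {σ : Type} [DecidableEq σ] (s : Impression → σ) (c : Conversion) :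
    List (Impression × ℝ) → (σ → ℝ) × ((Impression × Conversion) →₀ ℝ) →
      (σ → ℝ) × ((Impression × Conversion) →₀ ℝ)
  | [], st => st
  | (i, w) :: rest, st =>
      if w ≤ st.1 (s i) then
        applyPairs s c rest
          (Function.update st.1 (s i) (st.1 (s i) - w), st.2 + Finsupp.single (i, c) w)
      else
        applyPairs s c rest st

/-- Attribution with post-attribution contribution bound enforcement (Algorithm 1),
with contribution bounding scope map `s` and contribution bound `r`. -/
noncomputable def postAttr {σ : Type} [DecidableEq σ] (a : AttrRule) (s : Impression → σ)
    (r : ℝ) (D : Dataset) : (Impression × Conversion) →₀ ℝ :=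
  (D.convs.foldl
    (fun st c => applyPairs s c ((eligible D c).zip (a (eligible D c) c)) st)
    ((fun _ => r : σ → ℝ), (0 : (Impression × Conversion) →₀ ℝ))).2

/-- Attribution with pre-attribution contribution bound enforcement (Algorithm 2):
for each conversion, every scope with an eligible impression pays one unit of its bound
if available, otherwise its impressions are excluded from attribution. -/
noncomputable def preAttr {σ : Type} [DecidableEq σ] (a : AttrRule) (s : Impression → σ)
    (r : ℝ) (D : Dataset) : (Impression × Conversion) →₀ ℝ :=
  (D.convs.foldl
    (fun (st : (σ → ℝ) × ((Impression × Conversion) →₀ ℝ)) c =>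
      let el := eligible D c
      let surv := el.filter fun i => decide ((1 : ℝ) ≤ st.1 (s i))
      let scopes := (el.map s).dedup
      ((fun x => if x ∈ scopes ∧ (1 : ℝ) ≤ st.1 x then st.1 x - 1 else st.1 x : σ → ℝ),
        st.2 + ((surv.zip (a surv c)).map fun p => Finsupp.single (p.1, c) p.2).sum))
    ((fun _ => r : σ → ℝ), (0 : (Impression × Conversion) →₀ ℝ))).2

/-- Attribution without any contribution bound enforcement. -/
noncomputable def attrNoCap (a : AttrRule) (D : Dataset) :
    (Impression × Conversion) →₀ ℝ :=
  (D.convs.map fun c =>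
    (((eligible D c).zip (a (eligible D c) c)).map fun p => Finsupp.single (p.1, c) p.2).sum).sum

/-- Adjacency: `D'` results from `D` by adding a single impression (in time order). -/
def AddOneImpression (D D' : Dataset) : Prop :=
  ∃ (i0 : Impression) (l₁ l₂ : List Impression),
    D.imps = l₁ ++ l₂ ∧ D'.imps = l₁ ++ i0 :: l₂ ∧ D.convs = D'.convs

/-- Adjacency: `D` results from `D'` by removing all impressions whose scope (under `si`)
is `v` and all conversions whose scope (under `sc`) is `v`. -/
def RemovesScope {σ : Type} [DecidableEq σ] (si : Impression → σ)
    (sc : Conversion → Option σ) (v : σ) (D D' : Dataset) : Prop :=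
  D.imps = D'.imps.filter (fun i => decide (si i ≠ v)) ∧
  D.convs = D'.convs.filter (fun c => decide (sc c ≠ some v))

/-- First-touch attribution. -/
noncomputable def FTA : AttrRule := fun is _ =>
  match is with
  | [] => []
  | _ :: t => 1 :: t.map fun _ => 0

/-- Last-touch attribution. -/
noncomputable def LTA : AttrRule := fun is _ =>
  match is with
  | [] => []
  | _ :: _ => List.replicate (is.length - 1) 0 ++ [1]

/-- Uniform multi-touch attribution. -/
noncomputable def UNI : AttrRule := fun is _ => is.map fun _ => ((is.length : ℝ))⁻¹

/-- U-shaped attribution. -/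
noncomputable def USH : AttrRule := fun is _ =>
  match is with
  | [] => []
  | [_] => [1]
  | [_, _] => [0.5, 0.5]
  | _ :: _ :: _ :: _ =>
      (0.4 : ℝ) :: (List.replicate (is.length - 2) ((0.2 : ℝ) / ((is.length : ℝ) - 2)) ++ [0.4])

/-- Exponential time decay attribution with half-life `th`. -/
noncomputable def EXPR (th : ℝ) : AttrRule := fun is c =>
  let wt : Impression → ℝ := fun i => (2 : ℝ) ^ (-(((c.time : ℝ) - (i.time : ℝ)) / th))
  is.map fun i => wt i / (is.map wt).sum


/-! Give each impression of a single user and advertiser its own publisher, so that each one is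
a contribution-bounding scope of its own, and let the removed scope (publisher 0) dilute the
credit of the others. If every remaining impression receives credit `w` without and `w'` with
the diluting impressions, for each of `N` conversions, and `N * w ≤ 1`, no credit is ever capped;
the ℓ1 distance is then at least (number of impressions) · `N` · `|w - w'|`, which is unbounded.
With all impressions at the same time, exponential time decay coincides with uniform
attribution. -/

section ScopeLocality

variable {σ : Type} [DecidableEq σ] (s : Impression → σ)

def ScopeAgree (v : σ) (st st' : (σ → ℝ) × ((Impression × Conversion) →₀ ℝ)) : Prop :=
  st.1 v = st'.1 v ∧ ∀ y c, s y = v → st.2 (y, c) = st'.2 (y, c)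

/-- Enforcement is local to scopes: on scope `v`, `applyPairs` only sees the pairs of scope `v`. -/
theorem ScopeAgree.applyPairs_filter {v : σ} (c : Conversion) :
    ∀ (L : List (Impression × ℝ)) {st st'}, ScopeAgree s v st st' →
      ScopeAgree s v (applyPairs s c L st)
        (applyPairs s c (L.filter fun p => s p.1 = v) st')
  | [], _, _, h => h
  | (i, w) :: L, st, st', h => by
    by_cases hi : s i = v
    · subst hi
      rw [List.filter_cons_of_pos (by simp)]
      simp only [applyPairs, h.1]
      split_ifs
      · refine ScopeAgree.applyPairs_filter c L ⟨by simp, fun y c' hy => ?_⟩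
        simp [h.2 y c' hy]
      · exact ScopeAgree.applyPairs_filter c L h
    · rw [List.filter_cons_of_neg (by simpa using hi)]
      simp only [applyPairs]
      split_ifs
      · refine ScopeAgree.applyPairs_filter c L ⟨?_, fun y c' hy => ?_⟩
        · simpa [Function.update_of_ne (Ne.symm hi)] using h.1
        · have hne : (i, c) ≠ (y, c') := fun he => hi (by rw [(Prod.mk.inj he).1, hy])
          simp [hne, h.2 y c' hy]
      · exact ScopeAgree.applyPairs_filter c L h

theorem applyPairs_of_filter_eq_singleton {x : Impression} {w : ℝ} {c : Conversion}
    {L : List (Impression × ℝ)} (hL : L.filter (fun p => s p.1 = s x) = [(x, w)])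
    {st : (σ → ℝ) × ((Impression × Conversion) →₀ ℝ)} (hw : w ≤ st.1 (s x)) :
    (applyPairs s c L st).1 (s x) = st.1 (s x) - w ∧
      ∀ c', (applyPairs s c L st).2 (x, c') = st.2 (x, c') + if c = c' then w else 0 := by
  have h := ScopeAgree.applyPairs_filter s (v := s x) c L (st' := st) ⟨rfl, fun _ _ _ => rfl⟩
  rw [hL] at h
  simp only [applyPairs, hw, if_true] at h
  refine ⟨by simpa using h.1, fun c' => ?_⟩
  rw [h.2 x c' rfl]
  simp [Finsupp.single_apply]

theorem foldl_applyPairs_apply {x : Impression} {w : ℝ} (hw : 0 ≤ w)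
    (Z : Conversion → List (Impression × ℝ)) :
    ∀ (cs : List Conversion) (st : (σ → ℝ) × ((Impression × Conversion) →₀ ℝ)),
      (∀ c ∈ cs, (Z c).filter (fun p => s p.1 = s x) = [(x, w)]) →
      cs.length * w ≤ st.1 (s x) → ∀ c',
      (cs.foldl (fun st c => applyPairs s c (Z c) st) st).2 (x, c') =
        st.2 (x, c') + cs.count c' * w
  | [], st, _, _, c' => by simp
  | c :: cs, st, hZ, hbudget, c' => by
    simp only [List.length_cons, Nat.cast_succ] at hbudget
    have hstep := applyPairs_of_filter_eq_singleton s (c := c) (hZ c (by simp)) (st := st)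
      (by nlinarith [(by positivity : (0 : ℝ) ≤ cs.length * w)])
    rw [List.foldl_cons, foldl_applyPairs_apply hw Z cs _ (fun c hc => hZ c (by simp [hc]))
      (by rw [hstep.1]; linarith), hstep.2, List.count_cons]
    by_cases hc : c = c' <;> simp [hc]
    ring

theorem postAttr_apply_of_filter_eq_singleton (a : AttrRule) {r w : ℝ} {D : Dataset}
    {x : Impression} (hw : 0 ≤ w) (hbudget : D.convs.length * w ≤ r)
    (hZ : ∀ c ∈ D.convs,
      ((eligible D c).zip (a (eligible D c) c)).filter (fun p => s p.1 = s x) = [(x, w)])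
    (c : Conversion) :
    postAttr a s r D (x, c) = D.convs.count c * w := by
  simpa [postAttr] using foldl_applyPairs_apply s hw _ D.convs ((fun _ => r), 0) hZ hbudget c

end ScopeLocality

theorem sum_abs_sub_le_l1dist (F F' : (Impression × Conversion) →₀ ℝ)
    (S : Finset (Impression × Conversion)) : ∑ p ∈ S, |F p - F' p| ≤ l1dist F F' := by
  classical
  rw [l1dist, Finsupp.sum_of_support_subset _ (Finset.subset_union_right (s₁ := S)) _
    (fun _ _ => abs_zero)]
  simpa using Finset.sum_le_sum_of_subset_of_nonneg Finset.subset_union_left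
    (fun p _ _ => abs_nonneg ((F - F') p))

theorem mul_abs_sub_le_l1dist {F F' : (Impression × Conversion) →₀ ℝ} {w w' : ℝ}
    {xs : List Impression} {cs : List Conversion} (hxs : xs.Nodup) (hcs : cs.Nodup)
    (hF : ∀ x ∈ xs, ∀ c ∈ cs, F (x, c) = w)
    (hF' : ∀ x ∈ xs, ∀ c ∈ cs, F' (x, c) = w') :
    xs.length * cs.length * |w - w'| ≤ l1dist F F' := by
  classical
  calc (xs.length * cs.length * |w - w'| : ℝ)
      = ∑ p ∈ xs.toFinset ×ˢ cs.toFinset, |F p - F' p| := by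
        rw [Finset.sum_congr rfl fun p hp => by
          simp only [Finset.mem_product, List.mem_toFinset] at hp
          rw [hF _ hp.1 _ hp.2, hF' _ hp.1 _ hp.2]]
        simp [List.toFinset_card_of_nodup hxs, List.toFinset_card_of_nodup hcs]
    _ ≤ l1dist F F' := sum_abs_sub_le_l1dist F F' _

theorem List.zip_replicate_length {α β : Type*} (l : List α) (b : β) :
    l.zip (List.replicate l.length b) = l.map (·, b) := by
  induction l with
  | nil => rfl
  | cons x l ih => simp [List.replicate_succ, ih]

theorem postAttr_congr_rule {a b : AttrRule} {σ : Type} [DecidableEq σ] (s : Impression → σ)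
    (r : ℝ) {D : Dataset} (h : ∀ c ∈ D.convs, a (eligible D c) c = b (eligible D c) c) :
    postAttr a s r D = postAttr b s r D := by
  unfold postAttr
  rw [List.foldl_ext _ _ _ fun st c hc => by rw [h c hc]]

theorem EXPR_eq_UNI_of_forall_time_eq (th : ℝ) {l : List Impression} {t : ℕ}
    (h : ∀ y ∈ l, y.time = t) (c : Conversion) : EXPR th l c = UNI l c := by
  set b : ℝ := (2 : ℝ) ^ (-(((c.time : ℝ) - (t : ℝ)) / th))
  have hb : b ≠ 0 := (Real.rpow_pos_of_pos two_pos _).ne'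
  have hwt : ∀ y ∈ l, (2 : ℝ) ^ (-(((c.time : ℝ) - (y.time : ℝ)) / th)) = b :=
    fun y hy => by rw [h y hy]
  simp only [EXPR, UNI, List.map_congr_left hwt, List.map_const', List.sum_replicate,
    nsmul_eq_mul]
  rw [← List.map_const']
  exact List.map_congr_left fun y hy => by rw [hwt y hy, div_mul_cancel_right₀ hb]

theorem USH_cons_append (y z : Impression) {mid : List Impression} (h : mid ≠ [])
    (c : Conversion) :
    USH (y :: (mid ++ [z])) c =
      (0.4 : ℝ) :: (List.replicate mid.length ((0.2 : ℝ) / mid.length) ++ [(0.4 : ℝ)]) := by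
  obtain ⟨u, v, rest, hrest⟩ : ∃ u v rest, mid ++ [z] = u :: v :: rest := by
    obtain ⟨u, t, rfl⟩ := List.exists_cons_of_ne_nil h
    cases t <;> simp
  have hlen : mid.length = rest.length + 1 := by
    simpa using congrArg List.length hrest
  rw [hrest, hlen]
  simp only [USH, List.length_cons]
  congr 4
  push_cast
  ring

abbrev upaScope : Impression → ℕ × ℕ × ℕ := fun i => (i.user, i.pub, i.adv)

def UPAPostAttrInvalid (a : AttrRule) : Prop :=
  ∀ C₀ : ℝ, 0 < C₀ → ∃ (D D' : Dataset) (v : ℕ × ℕ × ℕ),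
    RemovesScope upaScope (fun _ => none) v D D' ∧ SortedDS D' ∧
    C₀ < l1dist (postAttr a upaScope 1 D) (postAttr a upaScope 1 D')

def pubImp (j : ℕ) : Impression := ⟨0, 0, j, 0, 0⟩

def conv (i : ℕ) : Conversion := ⟨1, 0, 0, i⟩

def pubDataset (L : List ℕ) (N : ℕ) : Dataset := ⟨L.map pubImp, (List.range N).map conv⟩

theorem pubImp_injective : Function.Injective pubImp := fun _ _ h => congrArg Impression.pub h

theorem conv_injective : Function.Injective conv := fun _ _ h => congrArg Conversion.id h

theorem filter_upaScope_map_pubImp (L : List ℕ) (j : ℕ) :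
    (L.map pubImp).filter (fun y => upaScope y = upaScope (pubImp j)) =
      List.replicate (L.count j) (pubImp j) := by
  have h : ∀ j', upaScope (pubImp j') = upaScope (pubImp j) ↔ j' = j := by simp [pubImp]
  simp only [List.filter_map, Function.comp_def, h, List.filter_eq, List.map_replicate]

theorem eligible_pubDataset (L : List ℕ) (N i : ℕ) :
    eligible (pubDataset L N) (conv i) = L.map pubImp :=
  List.filter_eq_self.2 (by simp [pubDataset, pubImp, conv])

theorem removesScope_pubDataset {L L' : List ℕ} (h : L'.filter (· ≠ 0) = L) (N : ℕ) :
    RemovesScope upaScope (fun _ => none) (0, 0, 0) (pubDataset L N) (pubDataset L' N) := by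
  subst h
  simp [RemovesScope, pubDataset, List.filter_map, Function.comp_def, pubImp]
  rfl

theorem sortedDS_pubDataset (L : List ℕ) (N : ℕ) : SortedDS (pubDataset L N) := by
  simp [SortedDS, pubDataset, List.pairwise_map, pubImp, conv, List.pairwise_of_forall]

theorem postAttr_pubDataset_apply (a : AttrRule) {L : List ℕ} {N j : ℕ} {w : ℝ} (hw : 0 ≤ w)
    (hbudget : N * w ≤ 1)
    (hZ : ∀ i < N, ((L.map pubImp).zip (a (L.map pubImp) (conv i))).filter
      (fun p => upaScope p.1 = upaScope (pubImp j)) = [(pubImp j, w)])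
    {i : ℕ} (hi : i < N) :
    postAttr a upaScope 1 (pubDataset L N) (pubImp j, conv i) = w := by
  have hZ' : ∀ c ∈ (pubDataset L N).convs,
      ((eligible (pubDataset L N) c).zip (a (eligible (pubDataset L N) c) c)).filter
        (fun p => upaScope p.1 = upaScope (pubImp j)) = [(pubImp j, w)] := fun c hc => by
    obtain ⟨i, hi, rfl⟩ := List.mem_map.1 hc
    rw [eligible_pubDataset]
    exact hZ i (List.mem_range.1 hi)
  have hcount : (pubDataset L N).convs.count (conv i) = 1 :=
    List.count_eq_one_of_mem (List.nodup_range.map conv_injective)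
      (List.mem_map_of_mem (List.mem_range.2 hi))
  rw [postAttr_apply_of_filter_eq_singleton upaScope a hw
    (by simpa [pubDataset] using hbudget) hZ', hcount, Nat.cast_one, one_mul]

theorem mul_abs_sub_le_l1dist_pubDataset (a : AttrRule) {L L' T : List ℕ} {N : ℕ} {w w' : ℝ}
    (hT : T.Nodup)
    (hF : ∀ j ∈ T, ∀ i < N, postAttr a upaScope 1 (pubDataset L N) (pubImp j, conv i) = w)
    (hF' : ∀ j ∈ T, ∀ i < N,
      postAttr a upaScope 1 (pubDataset L' N) (pubImp j, conv i) = w') :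
    T.length * N * |w - w'| ≤
      l1dist (postAttr a upaScope 1 (pubDataset L N))
        (postAttr a upaScope 1 (pubDataset L' N)) := by
  simpa using mul_abs_sub_le_l1dist (hT.map pubImp_injective)
    ((List.nodup_range (n := N)).map conv_injective)
    (by simpa using fun j hj i hi => hF j hj i hi) (by simpa using fun j hj i hi => hF' j hj i hi)

theorem upaPostAttrInvalid_of_pubDataset {a : AttrRule}
    (h : ∀ C : ℝ, ∃ (L L' : List ℕ) (N : ℕ), L'.filter (· ≠ 0) = L ∧
      C < l1dist (postAttr a upaScope 1 (pubDataset L N))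
        (postAttr a upaScope 1 (pubDataset L' N))) :
    UPAPostAttrInvalid a := fun C _ =>
  let ⟨L, L', N, hL, hC⟩ := h C
  ⟨pubDataset L N, pubDataset L' N, (0, 0, 0), removesScope_pubDataset hL N,
    sortedDS_pubDataset L' N, hC⟩

theorem postAttr_EXPR_pubDataset (th : ℝ) (L : List ℕ) (N : ℕ) :
    postAttr (EXPR th) upaScope 1 (pubDataset L N) = postAttr UNI upaScope 1 (pubDataset L N) :=
  postAttr_congr_rule upaScope 1 fun c _ =>
    EXPR_eq_UNI_of_forall_time_eq th (t := 0) (by simp [eligible, pubDataset, pubImp]) c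

theorem postAttr_UNI_pubDataset {L : List ℕ} {N j : ℕ} (hj : L.count j = 1)
    (hN : N ≤ L.length) {i : ℕ} (hi : i < N) :
    postAttr UNI upaScope 1 (pubDataset L N) (pubImp j, conv i) = (L.length : ℝ)⁻¹ := by
  refine postAttr_pubDataset_apply UNI (by positivity) ?_ (fun i _ => ?_) hi
  · rw [← div_eq_mul_inv]
    exact div_le_one_of_le₀ (by exact_mod_cast hN) (by positivity)
  · rw [UNI, List.map_const', List.zip_replicate_length, List.filter_map]
    simp only [Function.comp_def]
    rw [filter_upaScope_map_pubImp, hj, List.length_map]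
    rfl

theorem postAttr_USH_pubDataset {a b : ℕ} {M : List ℕ} {N j : ℕ} (ha : a ≠ j) (hb : b ≠ j)
    (hj : M.count j = 1) (hbudget : N * ((0.2 : ℝ) / M.length) ≤ 1) {i : ℕ} (hi : i < N) :
    postAttr USH upaScope 1 (pubDataset (a :: (M ++ [b])) N) (pubImp j, conv i) =
      0.2 / M.length := by
  have hM : M.map pubImp ≠ [] := by
    simpa using List.ne_nil_of_mem (List.count_pos_iff.1 (hj ▸ Nat.one_pos))
  refine postAttr_pubDataset_apply USH (by positivity) hbudget (fun i _ => ?_) hi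
  have hscope : ∀ k, k ≠ j → upaScope (pubImp k) ≠ upaScope (pubImp j) := fun k hk h =>
    hk (pubImp_injective (by simpa [pubImp] using h))
  rw [List.map_cons, List.map_append, List.map_singleton, USH_cons_append _ _ hM,
    List.zip_cons_cons, List.zip_append (by simp), List.zip_replicate_length,
    List.zip_cons_cons, List.zip_nil_left,
    List.filter_cons_of_neg (by simpa using hscope a ha), List.filter_append,
    List.filter_cons_of_neg (by simpa using hscope b hb), List.filter_nil, List.append_nil,
    List.filter_map]
  simp only [Function.comp_def]
  rw [filter_upaScope_map_pubImp, hj, List.length_map]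
  rfl

theorem exists_lt_l1dist_UNI (C : ℝ) :
    ∃ (L L' : List ℕ) (N : ℕ), L'.filter (· ≠ 0) = L ∧
      C < l1dist (postAttr UNI upaScope 1 (pubDataset L N))
        (postAttr UNI upaScope 1 (pubDataset L' N)) := by
  obtain ⟨m, hm⟩ := exists_nat_gt (max (2 * C) 0)
  have hm0 : (0 : ℝ) < m := lt_of_le_of_lt (le_max_right _ _) hm
  have hmC : 2 * C < m := lt_of_le_of_lt (le_max_left _ _) hm
  refine ⟨List.range' 1 m, List.replicate m 0 ++ List.range' 1 m, m, ?_, ?_⟩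
  · simp only [List.filter_append, List.filter_replicate]
    simp [List.filter_eq_self, List.mem_range']
    omega
  have hF : ∀ j ∈ List.range' 1 m, ∀ i < m,
      postAttr UNI upaScope 1 (pubDataset (List.range' 1 m) m) (pubImp j, conv i) =
        (m : ℝ)⁻¹ :=
    fun j hj i hi => by
      simpa using postAttr_UNI_pubDataset (List.count_eq_one_of_mem List.nodup_range' hj)
        (by simp) hi
  have hF' : ∀ j ∈ List.range' 1 m, ∀ i < m,
      postAttr UNI upaScope 1 (pubDataset (List.replicate m 0 ++ List.range' 1 m) m)
        (pubImp j, conv i) = (2 * m : ℝ)⁻¹ :=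
    fun j hj i hi => by
      have hj0 : j ≠ 0 := by simp [List.mem_range'] at hj; omega
      have := postAttr_UNI_pubDataset (L := List.replicate m 0 ++ List.range' 1 m)
        (j := j) (by
          rw [List.count_append, List.count_replicate,
            List.count_eq_one_of_mem List.nodup_range' hj]
          simp [Ne.symm hj0]) (by simp) hi
      simpa [two_mul] using this
  calc C < m * m * |(m : ℝ)⁻¹ - (2 * m : ℝ)⁻¹| := by
        rw [abs_of_pos (by rw [sub_pos]; apply inv_strictAnti₀ hm0; linarith)]
        field_simp
        linarith
    _ ≤ _ := by simpa using mul_abs_sub_le_l1dist_pubDataset UNI List.nodup_range' hF hF'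

theorem exists_lt_l1dist_USH (C : ℝ) :
    ∃ (L L' : List ℕ) (N : ℕ), L'.filter (· ≠ 0) = L ∧
      C < l1dist (postAttr USH upaScope 1 (pubDataset L N))
        (postAttr USH upaScope 1 (pubDataset L' N)) := by
  obtain ⟨k, hk⟩ := exists_nat_gt (max (2 * C) 0)
  have hk0 : (0 : ℝ) < k := lt_of_le_of_lt (le_max_right _ _) hk
  have hkC : 2 * C < k := lt_of_le_of_lt (le_max_left _ _) hk
  set L := 1 :: (List.range' 2 k ++ [k + 2])
  -- the outer zeros of `L'` take the two 0.4 shares, so all of `L` sits in the middle of the U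
  have hL : ∀ j ∈ L, j ≠ 0 := by simp [L, List.mem_range']; omega
  refine ⟨L, 0 :: ((List.replicate k 0 ++ L) ++ [0]), 5 * k, ?_, ?_⟩
  · simpa [List.filter_append, List.filter_replicate, List.filter_eq_self] using hL
  have hF : ∀ j ∈ List.range' 2 k, ∀ i < 5 * k,
      postAttr USH upaScope 1 (pubDataset L (5 * k)) (pubImp j, conv i) = (0.2 : ℝ) / k :=
    fun j hj i hi => by
      have hj' := List.mem_range'_1.1 hj
      simpa using postAttr_USH_pubDataset (a := 1) (b := k + 2) (by omega) (by omega)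
        (List.count_eq_one_of_mem List.nodup_range' hj)
        (by simp; field_simp; norm_num) hi
  have hF' : ∀ j ∈ List.range' 2 k, ∀ i < 5 * k,
      postAttr USH upaScope 1 (pubDataset (0 :: ((List.replicate k 0 ++ L) ++ [0])) (5 * k))
        (pubImp j, conv i) = (0.2 : ℝ) / (2 * k + 2) :=
    fun j hj i hi => by
      have hj' := List.mem_range'_1.1 hj
      have hcount : (List.replicate k 0 ++ L).count j = 1 := by
        have h0 : 0 ≠ j := by omega
        have h1 : 1 ≠ j := by omega
        have h2 : k + 2 ≠ j := by omega
        simp [L, List.count_append, List.count_replicate, h0, h1, h2,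
          List.count_eq_one_of_mem List.nodup_range' hj]
      have hlen : ((List.replicate k 0 ++ L).length : ℝ) = 2 * k + 2 := by
        simp [L]
        ring
      have := postAttr_USH_pubDataset (a := 0) (b := 0) (N := 5 * k) (by omega) (by omega) hcount
        (by rw [hlen, ← mul_div_assoc, div_le_one (by positivity)]; push_cast; linarith) hi
      rwa [hlen] at this
  have hgap : (0.2 : ℝ) / (2 * k + 2) < 0.2 / k := by
    apply div_lt_div_of_pos_left (by norm_num) hk0
    linarith
  calc C < k * (5 * k : ℕ) * |(0.2 : ℝ) / k - 0.2 / (2 * k + 2)| := by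
        have hval : (k : ℝ) * (5 * k : ℕ) * ((0.2 : ℝ) / k - 0.2 / (2 * k + 2)) =
            k * (k + 2) / (2 * k + 2) := by
          push_cast
          field_simp
          ring
        rw [abs_of_pos (sub_pos.2 hgap), hval, lt_div_iff₀ (by positivity)]
        nlinarith
    _ ≤ _ := by simpa using mul_abs_sub_le_l1dist_pubDataset USH List.nodup_range' hF hF'

/-- Corollary A.11: for uniform, exponential time decay, and U-shaped attribution, the
user × publisher × advertiser adjacency relation with post-attribution enforcement is
invalid: with bound `r = 1`, for every constant `C₀ > 0` there are adjacent datasets whose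
attributed datasets are at ℓ₁-distance greater than `C₀`. -/
theorem post_attr_upa_uni_exp_ushaped_invalid :
    (∀ C₀ : ℝ, 0 < C₀ → ∃ (D D' : Dataset) (v : ℕ × ℕ × ℕ),
      RemovesScope (fun i => (i.user, i.pub, i.adv)) (fun _ => none) v D D' ∧ SortedDS D' ∧
      C₀ < l1dist (postAttr UNI (fun i => (i.user, i.pub, i.adv)) 1 D)
        (postAttr UNI (fun i => (i.user, i.pub, i.adv)) 1 D')) ∧
    (∀ th : ℝ, 0 < th → ∀ C₀ : ℝ, 0 < C₀ → ∃ (D D' : Dataset) (v : ℕ × ℕ × ℕ),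
      RemovesScope (fun i => (i.user, i.pub, i.adv)) (fun _ => none) v D D' ∧ SortedDS D' ∧
      C₀ < l1dist (postAttr (EXPR th) (fun i => (i.user, i.pub, i.adv)) 1 D)
        (postAttr (EXPR th) (fun i => (i.user, i.pub, i.adv)) 1 D')) ∧
    (∀ C₀ : ℝ, 0 < C₀ → ∃ (D D' : Dataset) (v : ℕ × ℕ × ℕ),
      RemovesScope (fun i => (i.user, i.pub, i.adv)) (fun _ => none) v D D' ∧ SortedDS D' ∧
      C₀ < l1dist (postAttr USH (fun i => (i.user, i.pub, i.adv)) 1 D)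
        (postAttr USH (fun i => (i.user, i.pub, i.adv)) 1 D')) := by
  have hUNI : UPAPostAttrInvalid UNI := upaPostAttrInvalid_of_pubDataset exists_lt_l1dist_UNI
  have hEXPR (th : ℝ) : UPAPostAttrInvalid (EXPR th) :=
    upaPostAttrInvalid_of_pubDataset fun C => by
      simpa only [postAttr_EXPR_pubDataset] using exists_lt_l1dist_UNI C
  have hUSH : UPAPostAttrInvalid USH := upaPostAttrInvalid_of_pubDataset exists_lt_l1dist_USH
  exact ⟨hUNI, fun th _ => hEXPR th, hUSH⟩
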